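/- arXiv:1710.10353 — 3 statements merged into one kernel-verified Lean document; each statement's English description precedes it below -/
import Mathlib

section
/- Let (G_h)_{h∈ℤ} (indexed by decreasing h, with transition maps G_h → G_{h'} for h ≤ h') be an inverse system of groups satisfying the Mittag-Leffler condition. Then the natural map from G/(lim_h [G_h,G_h]) to lim_h (G_h/[G_h,G_h]) is a group isomorphism, where G = lim_h G_h is the inverse limit. -/
section InverseSystems

variable (G : ℤ → Type*) [∀ h, Group (G h)]
  (T : ∀ ⦃h h' : ℤ⦄, h ≤ h' → (G h →* G h'))

/-- The inverse limit of an inverse system of groups indexed by `ℤ` (with transition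
maps `G_h → G_{h'}` for `h ≤ h'`, and the limit taken as `h → -∞`), realized as the
subgroup of the product consisting of compatible families. -/
def invLim : Subgroup (∀ h, G h) where
  carrier := {x | ∀ ⦃h h' : ℤ⦄ (hle : h ≤ h'), T hle (x h) = x h'}
  one_mem' := by intro h h' hle; simp
  mul_mem' := by intro a b ha hb h h' hle; simp [Pi.mul_apply, ha hle, hb hle]
  inv_mem' := by intro a ha h h' hle; simp [Pi.inv_apply, ha hle]

/-- The Mittag-Leffler condition for an inverse system of groups indexed by `ℤ`:
for each `h₀` the images of the maps `G_h → G_{h₀}` stabilize for `h` small enough. -/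
def MittagLeffler : Prop :=
  ∀ h₀ : ℤ, ∃ h₁ : ℤ, ∃ h₁le : h₁ ≤ h₀, ∀ (h : ℤ) (hh : h ≤ h₁),
    (T (hh.trans h₁le)).range = (T h₁le).range

/-- The inverse limit `lim_h [G_h, G_h]` of the commutator subgroups, viewed as a
subgroup of the inverse limit `G = lim_h G_h`. -/
def limCommutator : Subgroup (invLim G T) where
  carrier := {x | ∀ h : ℤ, (x : ∀ h, G h) h ∈ commutator (G h)}
  one_mem' := by intro h; exact Subgroup.one_mem _
  mul_mem' := by intro a b ha hb h; exact Subgroup.mul_mem _ (ha h) (hb h)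
  inv_mem' := by intro a ha h; exact Subgroup.inv_mem _ (ha h)

/-- The natural map from `G = lim_h G_h` to `lim_h (G_h/[G_h,G_h])`, the inverse limit
of the abelianizations. -/
def toLimAb : invLim G T →*
    invLim (fun h => Abelianization (G h)) (fun _ _ hle => Abelianization.map (T hle)) where
  toFun x := ⟨fun h => Abelianization.of ((x : ∀ h, G h) h), by
    intro h h' hle
    show Abelianization.map (T hle) (Abelianization.of _) = _
    rw [Abelianization.map_of, x.2 hle]⟩
  map_one' := by ext h; simp
  map_mul' := by intro a b; ext h; simp

end InverseSystems

section Aux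

variable {G : ℤ → Type*} [∀ h, Group (G h)]
  (T : ∀ ⦃h h' : ℤ⦄, h ≤ h' → (G h →* G h'))
  (y : ∀ h : ℤ, Abelianization (G h))

/-- The set of elements of `G h₀` that arise as the image of a lift of `y h` in `G h`. -/
def LiftSet ⦃h h₀ : ℤ⦄ (hle : h ≤ h₀) : Set (G h₀) :=
  {g | ∃ z : G h, Abelianization.of z = y h ∧ T hle z = g}

/-- The stable lift set: elements of `G h₀` that admit lifts from every level below. -/
def StableLift (h₀ : ℤ) : Set (G h₀) :=
  {g | ∀ ⦃h : ℤ⦄ (hle : h ≤ h₀), g ∈ LiftSet T y hle}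

variable {T y}

lemma liftSet_nonempty ⦃h h₀ : ℤ⦄ (hle : h ≤ h₀) : (LiftSet T y hle).Nonempty := by
  obtain ⟨z, hz⟩ := QuotientGroup.mk_surjective (y h)
  exact ⟨T hle z, z, hz, rfl⟩

lemma liftSet_mul ⦃h h₀ : ℤ⦄ (hle : h ≤ h₀) {g : G h₀} {k : G h}
    (hg : g ∈ LiftSet T y hle) (hk : k ∈ commutator (G h)) :
    g * T hle k ∈ LiftSet T y hle := by
  obtain ⟨z, hz, rfl⟩ := hg
  refine ⟨z * k, ?_, by rw [map_mul]⟩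
  rw [map_mul, hz, show Abelianization.of k = 1 from (QuotientGroup.eq_one_iff k).2 hk, mul_one]

lemma liftSet_diff ⦃h h₀ : ℤ⦄ (hle : h ≤ h₀) {g g' : G h₀}
    (hg : g ∈ LiftSet T y hle) (hg' : g' ∈ LiftSet T y hle) :
    ∃ k ∈ commutator (G h), g' = g * T hle k := by
  obtain ⟨z, hz, rfl⟩ := hg
  obtain ⟨z', hz', rfl⟩ := hg'
  refine ⟨z⁻¹ * z', ?_, by rw [← map_mul, mul_inv_cancel_left]⟩
  have : Abelianization.of (z⁻¹ * z') = 1 := by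
    rw [map_mul, map_inv, hz, hz']; simp
  exact (QuotientGroup.eq_one_iff _).1 this

section WithHyps

variable (Hcomp : ∀ ⦃h h' h'' : ℤ⦄ (a : h ≤ h') (b : h' ≤ h''),
      (T b).comp (T a) = T (a.trans b))
variable (ycompat : ∀ ⦃h h' : ℤ⦄ (hle : h ≤ h'), Abelianization.map (T hle) (y h) = y h')

include Hcomp ycompat in
lemma liftSet_mono ⦃h h' h₀ : ℤ⦄ (a : h ≤ h') (b : h' ≤ h₀) :
    LiftSet T y (a.trans b) ⊆ LiftSet T y b := by
  rintro g ⟨z, hz, rfl⟩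
  refine ⟨T a z, ?_, DFunLike.congr_fun (Hcomp a b) z⟩
  rw [← Abelianization.map_of, hz, ycompat a]

lemma kml (ML : MittagLeffler G T) (h₀ : ℤ) :
    ∃ h₁ : ℤ, ∃ h₁le : h₁ ≤ h₀, ∀ (h : ℤ) (hh : h ≤ h₁),
      (commutator (G h)).map (T (hh.trans h₁le)) = (commutator (G h₁)).map (T h₁le) := by
  obtain ⟨h₁, h₁le, hstab⟩ := ML h₀
  refine ⟨h₁, h₁le, fun h hh => ?_⟩
  rw [commutator_def, commutator_def, Subgroup.map_commutator, Subgroup.map_commutator,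
    ← MonoidHom.range_eq_map, ← MonoidHom.range_eq_map, hstab h hh]

include Hcomp ycompat in
lemma stableLift_of_liftSet (ML : MittagLeffler G T) (h₀ : ℤ) :
    ∃ h₁ : ℤ, ∃ h₁le : h₁ ≤ h₀, ∀ g, g ∈ LiftSet T y h₁le → g ∈ StableLift T y h₀ := by
  obtain ⟨h₁, h₁le, hK⟩ := kml ML h₀
  refine ⟨h₁, h₁le, fun g hg h hle => ?_⟩
  rcases le_total h₁ h with hc | hc
  · exact liftSet_mono Hcomp ycompat hc hle hg
  · obtain ⟨g0, hg0⟩ := liftSet_nonempty (y := y) (hc.trans h₁le)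
    have hg0' : g0 ∈ LiftSet T y h₁le := liftSet_mono Hcomp ycompat hc h₁le hg0
    obtain ⟨k, hk, hgk⟩ := liftSet_diff h₁le hg0' hg
    have hmem : T h₁le k ∈ (commutator (G h)).map (T (hc.trans h₁le)) := by
      rw [hK h hc]; exact ⟨k, hk, rfl⟩
    obtain ⟨k', hk', hkk⟩ := hmem
    rw [hgk, ← hkk]
    exact liftSet_mul (hc.trans h₁le) hg0 hk'

include Hcomp ycompat in
lemma stableLift_nonempty (ML : MittagLeffler G T) (h₀ : ℤ) :
    (StableLift T y h₀).Nonempty := by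
  obtain ⟨h₁, h₁le, hstab⟩ := stableLift_of_liftSet Hcomp ycompat ML h₀
  obtain ⟨g, hg⟩ := liftSet_nonempty (y := y) h₁le
  exact ⟨g, hstab g hg⟩

include Hcomp ycompat in
lemma stableLift_step (ML : MittagLeffler G T) ⦃h' h₀ : ℤ⦄ (hle : h' ≤ h₀)
    {g : G h₀} (hg : g ∈ StableLift T y h₀) :
    ∃ g' : G h', g' ∈ StableLift T y h' ∧ T hle g' = g := by
  obtain ⟨h₁, h₁le, hstab⟩ := stableLift_of_liftSet Hcomp ycompat ML h'
  obtain ⟨w0, hw0⟩ := QuotientGroup.mk_surjective (y h₁)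
  have hw : T h₁le w0 ∈ LiftSet T y h₁le := ⟨w0, hw0, rfl⟩
  have hTw : T hle (T h₁le w0) ∈ LiftSet T y (h₁le.trans hle) :=
    ⟨w0, hw0, (show ((T hle).comp (T h₁le)) w0 = T (h₁le.trans hle) w0 from
      DFunLike.congr_fun (Hcomp h₁le hle) w0).symm⟩
  have hgmem : g ∈ LiftSet T y (h₁le.trans hle) := hg (h₁le.trans hle)
  obtain ⟨k, hk, hgk⟩ := liftSet_diff (h₁le.trans hle) hTw hgmem
  refine ⟨T h₁le w0 * T h₁le k, hstab _ (liftSet_mul h₁le hw hk), ?_⟩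
  have e : T hle (T h₁le k) = T (h₁le.trans hle) k := DFunLike.congr_fun (Hcomp h₁le hle) k
  rw [map_mul, e]
  exact hgk.symm

lemma of_stableLift (Hid : ∀ h : ℤ, T (le_refl h) = MonoidHom.id (G h))
    {h₀ : ℤ} {g : G h₀} (hg : g ∈ StableLift T y h₀) :
    Abelianization.of g = y h₀ := by
  obtain ⟨z, hz, hTz⟩ := hg (le_refl h₀)
  rw [Hid h₀] at hTz
  rw [← hTz]; exact hz

end WithHyps

end Aux

/-- If an inverse system of groups `(G_h)_{h ∈ ℤ}` satisfies the Mittag-Leffler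
condition, then the natural map from `G/(lim_h [G_h,G_h])` to `lim_h (G_h/[G_h,G_h])`
is an isomorphism, where `G = lim_h G_h`: equivalently, the natural map
`G → lim_h (G_h/[G_h,G_h])` is surjective with kernel `lim_h [G_h,G_h]`. -/
theorem proAbelianization_iso (G : ℤ → Type*) [∀ h, Group (G h)]
    (T : ∀ ⦃h h' : ℤ⦄, h ≤ h' → (G h →* G h'))
    (Hid : ∀ h : ℤ, T (le_refl h) = MonoidHom.id (G h))
    (Hcomp : ∀ ⦃h h' h'' : ℤ⦄ (a : h ≤ h') (b : h' ≤ h''),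
      (T b).comp (T a) = T (a.trans b))
    (ML : MittagLeffler G T) :
    Function.Surjective (toLimAb G T) ∧ (toLimAb G T).ker = limCommutator G T := by
  constructor
  · intro y
    set yv : ∀ h : ℤ, Abelianization (G h) := (y : ∀ h, Abelianization (G h)) with hyv
    have ycompat : ∀ ⦃h h' : ℤ⦄ (hle : h ≤ h'),
        Abelianization.map (T hle) (yv h) = yv h' := fun h h' hle => y.2 hle
    -- the descending sequence of stable lifts along -n, n : ℕ
    obtain ⟨g0, hg0⟩ := stableLift_nonempty Hcomp ycompat ML (-((0 : ℕ) : ℤ))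
    have hlen : ∀ n : ℕ, (-(((n + 1 : ℕ)) : ℤ)) ≤ -((n : ℕ) : ℤ) := fun n => by
      push_cast; omega
    have hstep : ∀ (n : ℕ) (g : G (-((n : ℕ) : ℤ))), g ∈ StableLift T yv (-((n : ℕ) : ℤ)) →
        ∃ g' : G (-(((n + 1 : ℕ)) : ℤ)), g' ∈ StableLift T yv (-(((n + 1 : ℕ)) : ℤ)) ∧
          T (hlen n) g' = g := fun n g hg =>
      stableLift_step Hcomp ycompat ML (hlen n) hg
    choose f hf1 hf2 using hstep
    let seq : ∀ n : ℕ, {g : G (-((n : ℕ) : ℤ)) // g ∈ StableLift T yv (-((n : ℕ) : ℤ))} :=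
      fun n => Nat.rec ⟨g0, hg0⟩ (fun n p => ⟨f n p.1 p.2, hf1 n p.1 p.2⟩) n
    have seq_succ : ∀ n : ℕ, T (hlen n) (seq (n + 1)).1 = (seq n).1 :=
      fun n => hf2 n (seq n).1 (seq n).2
    have chain : ∀ (m n : ℕ) (hmn : m ≤ n),
        T (show -((n : ℕ) : ℤ) ≤ -((m : ℕ) : ℤ) by omega)
          (seq n).1 = (seq m).1 := by
      intro m n
      induction n with
      | zero =>
        intro hmn
        obtain rfl : m = 0 := Nat.le_zero.1 hmn
        exact DFunLike.congr_fun (Hid _) _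
      | succ n ih =>
        intro hmn
        rcases Nat.lt_or_ge m (n + 1) with hlt | hge
        · have hmn' : m ≤ n := Nat.lt_succ_iff.1 hlt
          have pf2 : -((n : ℕ) : ℤ) ≤ -((m : ℕ) : ℤ) := by
            exact_mod_cast neg_le_neg (Int.ofNat_le.2 hmn')
          calc T ((hlen n).trans pf2) (seq (n + 1)).1
              = T pf2 (T (hlen n) (seq (n + 1)).1) :=
                (DFunLike.congr_fun (Hcomp (hlen n) pf2) _).symm
            _ = T pf2 (seq n).1 := by rw [seq_succ n]
            _ = (seq m).1 := ih hmn'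
        · obtain rfl : m = n + 1 := le_antisymm hmn hge
          exact DFunLike.congr_fun (Hid _) _
    have hidx : ∀ h : ℤ, (-(((-h).toNat : ℕ) : ℤ)) ≤ h := fun h => by omega
    set x : ∀ h, G h := fun h => T (hidx h) (seq ((-h).toNat)).1 with hx
    have hmem : x ∈ invLim G T := by
      intro h h' hle
      have hmn : (-h').toNat ≤ (-h).toNat := by omega
      have pf2 : -(((-h).toNat : ℕ) : ℤ) ≤ -(((-h').toNat : ℕ) : ℤ) := by omega
      calc T hle (x h) = T ((hidx h).trans hle) (seq ((-h).toNat)).1 :=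
            DFunLike.congr_fun (Hcomp (hidx h) hle) _
        _ = T (hidx h') (T pf2 (seq ((-h).toNat)).1) :=
            (DFunLike.congr_fun (Hcomp pf2 (hidx h')) _).symm
        _ = T (hidx h') (seq ((-h').toNat)).1 := by rw [chain _ _ hmn]
        _ = x h' := rfl
    refine ⟨⟨x, hmem⟩, ?_⟩
    apply Subtype.ext
    funext h
    show Abelianization.of (x h) = yv h
    have h1 : Abelianization.of ((seq ((-h).toNat)).1) = yv (-(((-h).toNat : ℕ) : ℤ)) :=
      of_stableLift Hid (seq ((-h).toNat)).2
    calc Abelianization.of (x h)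
        = Abelianization.map (T (hidx h)) (Abelianization.of (seq ((-h).toNat)).1) :=
          (Abelianization.map_of _ _).symm
      _ = Abelianization.map (T (hidx h)) (yv (-(((-h).toNat : ℕ) : ℤ))) := by rw [h1]
      _ = yv h := ycompat (hidx h)
  · ext x
    simp only [MonoidHom.mem_ker]
    constructor
    · intro hx
      show ∀ h : ℤ, (x : ∀ h, G h) h ∈ commutator (G h)
      intro h
      have h1 : Abelianization.of ((x : ∀ h, G h) h) = 1 :=
        congrFun (congrArg Subtype.val hx) h
      exact (QuotientGroup.eq_one_iff _).1 h1
    · intro hx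
      have hx' : ∀ h : ℤ, (x : ∀ h, G h) h ∈ commutator (G h) := hx
      apply Subtype.ext
      funext h
      exact (QuotientGroup.eq_one_iff _).2 (hx' h)
end

section
/- Let Λ = ℤ((t)) be the Novikov ring of formal Laurent series over ℤ, viewed as a module over the Laurent polynomial ring ℤ[t, t^{-1}]. Then Λ is a flat ℤ[t, t^{-1}]-module. -/
/-- The monoid homomorphism `Multiplicative ℤ →* ℤ((t))` sending `n` to `t^n`. -/
noncomputable def tPow : Multiplicative ℤ →* LaurentSeries ℤ where
  toFun n := HahnSeries.single (Multiplicative.toAdd n) (1 : ℤ)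
  map_one' := by simp
  map_mul' a b := by rw [HahnSeries.single_mul_single, one_mul]; rfl

/-- The natural inclusion of the ring `ℤ[t, t⁻¹]` of Laurent polynomials into the ring
`ℤ((t))` of formal Laurent series, sending `t^n` to `t^n`. -/
noncomputable def laurentPolyToLaurentSeries : LaurentPolynomial ℤ →+* LaurentSeries ℤ :=
  AddMonoidAlgebra.liftNCRingHom (Int.castRingHom (LaurentSeries ℤ)) tPow
    (fun _ _ => Commute.all _ _)

/-- The `ℤ[t,t⁻¹]`-module structure on `ℤ((t))` induced by the inclusion. -/
noncomputable instance : Module (LaurentPolynomial ℤ) (LaurentSeries ℤ) :=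
  laurentPolyToLaurentSeries.toModule

/-!
`ℤ⟦X⟧` is the `X`-adic completion of the Noetherian ring `ℤ[X]`, hence flat over it, and
`ℤ((X)) = ℤ⟦X⟧[1/X]` is a localization of `ℤ⟦X⟧`; so `ℤ((X))` is flat over `ℤ[X]`.
As `X` acts invertibly on `ℤ((X))`, it is its own localization at the powers of `X`,
hence flat over the localization `ℤ[X][1/X] = ℤ[T;T⁻¹]`.
-/

open Polynomial PowerSeries

theorem Module.Flat.of_ringEquiv {R R' M : Type*} [CommSemiring R] [CommSemiring R']
    [AddCommMonoid M] [Module R M] [Module R' M] (e : R ≃+* R')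
    (he : ∀ (r : R) (m : M), e r • m = r • m) [Module.Flat R' M] : Module.Flat R M := by
  let := e.toRingHom.toAlgebra
  have : IsScalarTower R R' M := .of_algebraMap_smul he
  have : Module.Flat R R' := Module.Flat.of_linearEquiv
    { e.symm.toAddEquiv with
      map_smul' := fun r r' => by simp [Algebra.smul_def, RingHom.algebraMap_toAlgebra] }
  exact Module.Flat.trans R R' M

theorem MvPowerSeries.flat_mvPolynomial (σ R : Type*) [Finite σ] [CommRing R]
    [IsNoetherianRing R] : Module.Flat (MvPolynomial σ R) (MvPowerSeries σ R) :=
  Module.Flat.of_linearEquiv (toAdicCompletionAlgEquiv σ R).toLinearEquiv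

theorem PowerSeries.algebraMap_uniqueAlgEquiv_symm (R : Type*) [CommRing R] (p : R[X]) :
    algebraMap (MvPolynomial Unit R) R⟦X⟧ ((MvPolynomial.uniqueAlgEquiv R Unit).symm p) =
      algebraMap R[X] R⟦X⟧ p := by
  have : (IsScalarTower.toAlgHom R (MvPolynomial Unit R) R⟦X⟧).comp
      (MvPolynomial.uniqueAlgEquiv R Unit).symm.toAlgHom =
        IsScalarTower.toAlgHom R R[X] R⟦X⟧ := by
    apply Polynomial.algHom_ext
    simp only [AlgHom.coe_comp, IsScalarTower.coe_toAlgHom', AlgEquiv.coe_toAlgHom,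
      Function.comp_apply, MvPolynomial.uniqueAlgEquiv_symm_apply, PUnit.default_eq_unit,
      Polynomial.eval₂_X, MvPowerSeries.algebraMap_apply', Algebra.algebraMap_self,
      MvPowerSeries.map_id, MvPolynomial.coe_X, RingHom.id_apply, algebraMap_apply',
      Polynomial.coe_X, map_X]
    rfl
  exact DFunLike.congr_fun this p

theorem PowerSeries.flat_polynomial (R : Type*) [CommRing R] [IsNoetherianRing R] :
    Module.Flat R[X] R⟦X⟧ := by
  have := MvPowerSeries.flat_mvPolynomial Unit R
  refine .of_ringEquiv (MvPolynomial.uniqueAlgEquiv R Unit).symm.toRingEquiv fun p f => ?_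
  rw [Algebra.smul_def, Algebra.smul_def]
  exact congrArg (· * f) (algebraMap_uniqueAlgEquiv_symm R p)

instance LaurentSeries.isScalarTower_polynomial_powerSeries (R : Type*) [CommRing R] :
    IsScalarTower R[X] R⟦X⟧ (LaurentSeries R) :=
  .of_algebraMap_eq' rfl

theorem LaurentSeries.flat_polynomial (R : Type*) [CommRing R] [IsNoetherianRing R] :
    Module.Flat R[X] (LaurentSeries R) := by
  have := PowerSeries.flat_polynomial R
  have : Module.Flat R⟦X⟧ (LaurentSeries R) := IsLocalization.flat _ (Submonoid.powers X)
  exact Module.Flat.trans R[X] R⟦X⟧ (LaurentSeries R)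

theorem laurentPolyToLaurentSeries_T (n : ℤ) :
    laurentPolyToLaurentSeries (LaurentPolynomial.T n) = HahnSeries.single n 1 := by
  rw [LaurentPolynomial.T, laurentPolyToLaurentSeries, AddMonoidAlgebra.liftNCRingHom_single]
  simp [tPow]

theorem laurentPolyToLaurentSeries_comp_algebraMap :
    laurentPolyToLaurentSeries.comp (algebraMap ℤ[X] (LaurentPolynomial ℤ)) =
      algebraMap ℤ[X] (LaurentSeries ℤ) := by
  refine Polynomial.ringHom_ext' (RingHom.ext_int _ _) ?_
  simp [laurentPolyToLaurentSeries_T]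

instance : IsScalarTower ℤ[X] (LaurentPolynomial ℤ) (LaurentSeries ℤ) :=
  .of_algebraMap_smul fun p f =>
    congrArg (· * f) (RingHom.congr_fun laurentPolyToLaurentSeries_comp_algebraMap p)

/-- The Novikov ring `Λ = ℤ((t))` of formal Laurent series is flat as a module over
the Laurent polynomial ring `ℤ[t, t⁻¹]`. -/
theorem laurentSeries_flat_over_laurentPolynomial :
    Module.Flat (LaurentPolynomial ℤ) (LaurentSeries ℤ) := by
  have := LaurentSeries.flat_polynomial ℤ
  have := isLocalizedModule_id (Submonoid.powers (X : ℤ[X])) (LaurentSeries ℤ)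
    (LaurentPolynomial ℤ)
  exact Module.Flat.of_isLocalizedModule (LaurentPolynomial ℤ) (Submonoid.powers (X : ℤ[X]))
    (LinearMap.id : LaurentSeries ℤ →ₗ[ℤ[X]] LaurentSeries ℤ)
end

section
/- Let f, g : X → ℝ be continuous functions on a topological space X with ‖f − g‖_∞ ≤ K < ∞. Then for all h ∈ ℝ the sublevel sets satisfy {f ≤ h − K} ⊆ {g ≤ h} ⊆ {f ≤ h + K}; consequently the two projective systems of groups π₁(X/{f ≤ h}) and π₁(X/{g ≤ h}) are intertwined by maps making the interleaving diagrams commute, and their projective limits over h → −∞ are isomorphic. -/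
open CategoryTheory
open scoped FundamentalGroupoid

variable {X : Type} [TopologicalSpace X] (f : X → ℝ)

/-- The predicate on `Unit ⊕ X` selecting the added basepoint together with the
sublevel set `X_h = {f ≤ h}`. -/
def inBase (h : ℝ) : Unit ⊕ X → Prop :=
  Sum.elim (fun _ => True) (fun x => f x ≤ h)

/-- The setoid on `Unit ⊕ X` collapsing the sublevel set `X_h = {f ≤ h}` (together
with an added basepoint) to a single point. -/
def collapseSetoid (h : ℝ) : Setoid (Unit ⊕ X) where
  r a b := a = b ∨ (inBase f h a ∧ inBase f h b)
  iseqv := by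
    refine ⟨fun a => Or.inl rfl, ?_, ?_⟩
    · rintro a b (rfl | ⟨ha, hb⟩)
      exacts [Or.inl rfl, Or.inr ⟨hb, ha⟩]
    · rintro a b c (rfl | ⟨ha, hb⟩) h2
      · exact h2
      · rcases h2 with rfl | ⟨_, hc⟩
        exacts [Or.inr ⟨ha, hb⟩, Or.inr ⟨ha, hc⟩]

/-- The quotient `X/X_h` collapsing the sublevel set `{f ≤ h}` to a point. -/
abbrev Zip (h : ℝ) := Quotient (collapseSetoid f h)

/-- The basepoint `⋆_h` of `X/X_h`, the class of the collapsed sublevel set. -/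
def zipBase (h : ℝ) : Zip f h := Quotient.mk _ (Sum.inl ())

/-- The map `X/X_h → X/X_{h'}` induced by the inclusion of sublevel sets, for `h ≤ h'`. -/
def zipMap {h h' : ℝ} (hle : h ≤ h') : C(Zip f h, Zip f h') :=
  ⟨Quotient.map' id (by
      rintro a b (rfl | ⟨ha, hb⟩)
      · exact Or.inl rfl
      · refine Or.inr ⟨?_, ?_⟩ <;>
        · first
          | (cases a with
              | inl u => trivial
              | inr x => exact le_trans (by exact ha) hle)
          | (cases b with
              | inl u => trivial
              | inr x => exact le_trans (by exact hb) hle)),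
    Continuous.quotient_map' continuous_id _⟩

/-- The homomorphism `π₁(X/X_h, ⋆_h) → π₁(X/X_{h'}, ⋆_{h'})` induced by `zipMap`. -/
noncomputable def zipInd {h h' : ℝ} (hle : h ≤ h') :
    FundamentalGroup (Zip f h) (zipBase f h) →*
      FundamentalGroup (Zip f h') (zipBase f h') :=
  CategoryTheory.Functor.mapEnd
    (X := (⟨zipBase f h⟩ : FundamentalGroupoid (TopCat.of (Zip f h))))
    (πₘ (show TopCat.of (Zip f h) ⟶ TopCat.of (Zip f h') from TopCat.ofHom (zipMap f hle)))

/-- The projective limit (as `h → -∞`) of the fundamental groups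
`π₁(X/X_h, ⋆_h)`, realized as compatible families. -/
noncomputable def limZipPi1 : Subgroup (∀ h : ℝ, FundamentalGroup (Zip f h) (zipBase f h)) where
  carrier := {x | ∀ ⦃h h' : ℝ⦄ (hle : h ≤ h'), zipInd f hle (x h) = x h'}
  one_mem' := by intro h h' hle; exact map_one _
  mul_mem' := by intro a b ha hb h h' hle; rw [Pi.mul_apply, Pi.mul_apply, map_mul, ha hle, hb hle]
  inv_mem' := by intro a ha h h' hle; simp [Pi.inv_apply, ha hle]


/-!
Every inclusion of sublevel sets `{f ≤ h} ⊆ {g ≤ h'}` induces a map `X/{f ≤ h} → X/{g ≤ h'}` of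
the collapsed quotients, and these maps compose. On a compatible family `x` the image of `x a` under
such a map does not depend on the level `a`: both choices factor through `x (min a b)`. Hence
whenever each sublevel set of `g` contains one of `f` and vice versa, pushing compatible
families forward gives mutually inverse homomorphisms between the two limits. A bound
`|f - g| ≤ K` supplies exactly such inclusions, with shift `K`.
-/

lemma sublevel_subset_sublevel_of_abs_sub_le {α : Type*} {f g : α → ℝ} {K : ℝ}
    (hK : ∀ x, |f x - g x| ≤ K) (h : ℝ) : {x | f x ≤ h - K} ⊆ {x | g x ≤ h} :=
  fun x (hx : f x ≤ h - K) => show g x ≤ h by linarith [(abs_le.mp (hK x)).1]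

lemma inBase_of_subset {α : Type} {f g : α → ℝ} {h h' : ℝ} (H : {x | f x ≤ h} ⊆ {x | g x ≤ h'})
    {a : Unit ⊕ α} (ha : inBase f h a) : inBase g h' a := by
  cases a with
  | inl _ => trivial
  | inr x => exact H ha

section Collapse

variable {f} {g k : X → ℝ}

def collapseMap {h h' : ℝ} (H : {x | f x ≤ h} ⊆ {x | g x ≤ h'}) : C(Zip f h, Zip g h') :=
  ⟨Quotient.map' id (by
      rintro a b (rfl | ⟨ha, hb⟩)
      · exact Or.inl rfl
      · exact Or.inr ⟨inBase_of_subset H ha, inBase_of_subset H hb⟩),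
    Continuous.quotient_map' continuous_id _⟩

lemma collapseMap_collapseMap {h₁ h₂ h₃ : ℝ} (H₁ : {x | f x ≤ h₁} ⊆ {x | g x ≤ h₂})
    (H₂ : {x | g x ≤ h₂} ⊆ {x | k x ≤ h₃}) (q : Zip f h₁) :
    collapseMap H₂ (collapseMap H₁ q) = collapseMap (H₁.trans H₂) q := by
  induction q using Quotient.ind
  rfl

noncomputable def collapseInd {h h' : ℝ} (H : {x | f x ≤ h} ⊆ {x | g x ≤ h'}) :
    FundamentalGroup (Zip f h) (zipBase f h) →* FundamentalGroup (Zip g h') (zipBase g h') :=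
  FundamentalGroup.map (collapseMap H) (zipBase f h)

lemma zipInd_eq_collapseInd {h h' : ℝ} (hle : h ≤ h') :
    zipInd f hle = collapseInd (Set.ofPred_subset_ofPred.2 fun _ hx => le_trans hx hle) :=
  rfl

lemma collapseInd_collapseInd {h₁ h₂ h₃ : ℝ} (H₁ : {x | f x ≤ h₁} ⊆ {x | g x ≤ h₂})
    (H₂ : {x | g x ≤ h₂} ⊆ {x | k x ≤ h₃}) (a : FundamentalGroup (Zip f h₁) (zipBase f h₁)) :
    collapseInd H₂ (collapseInd H₁ a) = collapseInd (H₁.trans H₂) a := by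
  induction a using Quotient.inductionOn with
  | h γ => exact congrArg _ (Path.ext (funext fun t => collapseMap_collapseMap H₁ H₂ (γ t)))

lemma collapseInd_eq_of_mem_limZipPi1 {x : ∀ h, FundamentalGroup (Zip f h) (zipBase f h)}
    (hx : x ∈ limZipPi1 f) {a b c : ℝ} (Ha : {z | f z ≤ a} ⊆ {z | g z ≤ c})
    (Hb : {z | f z ≤ b} ⊆ {z | g z ≤ c}) :
    collapseInd Ha (x a) = collapseInd Hb (x b) := by
  rw [← hx (min_le_left a b), ← hx (min_le_right a b), zipInd_eq_collapseInd,
    zipInd_eq_collapseInd, collapseInd_collapseInd, collapseInd_collapseInd]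

lemma collapseInd_eq_self_of_mem_limZipPi1 {x : ∀ h, FundamentalGroup (Zip f h) (zipBase f h)}
    (hx : x ∈ limZipPi1 f) {a h : ℝ} (H : {z | f z ≤ a} ⊆ {z | f z ≤ h}) :
    collapseInd H (x a) = x h := by
  rw [collapseInd_eq_of_mem_limZipPi1 hx H subset_rfl, ← zipInd_eq_collapseInd le_rfl, hx]

noncomputable def limZipPi1Map (s : ℝ → ℝ) (H : ∀ h, {x | f x ≤ s h} ⊆ {x | g x ≤ h}) :
    limZipPi1 f →* limZipPi1 g where
  toFun x := ⟨fun h => collapseInd (H h) (x.1 (s h)), fun h h' hle => by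
    dsimp only
    rw [zipInd_eq_collapseInd, collapseInd_collapseInd]
    exact collapseInd_eq_of_mem_limZipPi1 x.2 _ _⟩
  map_one' := Subtype.ext (funext fun _ => map_one _)
  map_mul' _ _ := Subtype.ext (funext fun _ => map_mul _ _ _)

lemma limZipPi1Map_comp_limZipPi1Map {s t : ℝ → ℝ} (H : ∀ h, {x | f x ≤ s h} ⊆ {x | g x ≤ h})
    (H' : ∀ h, {x | g x ≤ t h} ⊆ {x | f x ≤ h}) :
    (limZipPi1Map t H').comp (limZipPi1Map s H) = MonoidHom.id _ := by
  ext x : 1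
  refine Subtype.ext (funext fun h => ?_)
  exact (collapseInd_collapseInd _ _ _).trans (collapseInd_eq_self_of_mem_limZipPi1 x.2 _)

noncomputable def limZipPi1MulEquiv {s t : ℝ → ℝ} (H : ∀ h, {x | f x ≤ s h} ⊆ {x | g x ≤ h})
    (H' : ∀ h, {x | g x ≤ t h} ⊆ {x | f x ≤ h}) : limZipPi1 f ≃* limZipPi1 g :=
  (limZipPi1Map s H).toMulEquiv (limZipPi1Map t H') (limZipPi1Map_comp_limZipPi1Map H H')
    (limZipPi1Map_comp_limZipPi1Map H' H)

end Collapse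

theorem sublevel_interleaving_and_lim_iso (g : X → ℝ) (K : ℝ) (hK : ∀ x, |f x - g x| ≤ K) :
    (∀ h : ℝ, {x | f x ≤ h - K} ⊆ {x | g x ≤ h} ∧ {x | g x ≤ h} ⊆ {x | f x ≤ h + K}) ∧
    Nonempty (limZipPi1 f ≃* limZipPi1 g) := by
  have hfg := sublevel_subset_sublevel_of_abs_sub_le hK
  have hgf := sublevel_subset_sublevel_of_abs_sub_le fun x =>
    (abs_sub_comm (g x) (f x)).trans_le (hK x)
  refine ⟨fun h => ⟨hfg h, ?_⟩, ⟨limZipPi1MulEquiv hfg hgf⟩⟩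
  simpa using hgf (h + K)
end
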